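/- arXiv:2604.09078 — 3 statements merged into one kernel-verified Lean document; each statement's English description precedes it below -/
import Mathlib

section
/- Let X₁,…,X_γ be i.i.d. Bernoulli(q) and Y₁,…,Y_α be i.i.d. Bernoulli(p), all independent, with 0<q<p<1. Let Z := Σᵤ(Xᵤ−λ) + Σᵥ(λ−Yᵥ). Suppose λ satisfies e^{−t*λ}(q e^{t*}+1−q) ≤ 1 and e^{t*λ}(p e^{−t*}+1−p) ≤ 1, where t* := (1/2)log(p(1−q)/(q(1−p))). Then for every s ≥ 0, P(Z ≥ −s) ≤ exp(−I·min(α,γ) + t*·s), where I := −2·log(√(pq) + √((1−p)(1−q))). -/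
open MeasureTheory ProbabilityTheory

lemma bern_exp_integrable {Ω : Type*} [MeasurableSpace Ω] (μ : Measure Ω)
    [IsProbabilityMeasure μ] (X : Ω → ℝ) (hm : Measurable X)
    (h01 : ∀ ω, X ω = 0 ∨ X ω = 1) (t : ℝ) :
    Integrable (fun ω => Real.exp (t * X ω)) μ := by
  refine Integrable.mono' (integrable_const (max 1 (Real.exp t)))
    ((hm.const_mul t).exp.aestronglyMeasurable) (Filter.Eventually.of_forall fun ω => ?_)
  rw [Real.norm_eq_abs, abs_of_pos (Real.exp_pos _)]
  rcases h01 ω with h | h <;> simp [h]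

lemma bern_exp_integral {Ω : Type*} [MeasurableSpace Ω] (μ : Measure Ω)
    [IsProbabilityMeasure μ] (X : Ω → ℝ) (hm : Measurable X)
    (h01 : ∀ ω, X ω = 0 ∨ X ω = 1) (r : ℝ) (hr : 0 ≤ r)
    (hX : μ {ω | X ω = 1} = ENNReal.ofReal r) (t : ℝ) :
    ∫ ω, Real.exp (t * X ω) ∂μ = r * Real.exp t + 1 - r := by
  have hS : MeasurableSet {ω | X ω = 1} := hm (measurableSet_singleton 1)
  have heq : (fun ω => Real.exp (t * X ω))
      = fun ω => (Real.exp t - 1) * Set.indicator {ω | X ω = 1} 1 ω + 1 := by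
    funext ω
    rcases h01 ω with h | h
    · have : ω ∉ {ω | X ω = 1} := by simp [h]
      simp [h, Set.indicator_of_notMem this]
    · have : ω ∈ {ω | X ω = 1} := h
      simp [h, Set.indicator_of_mem this]
  rw [heq]
  have h1 : Integrable (fun ω => (Real.exp t - 1) * ({ω | X ω = 1}.indicator 1 ω)) μ := by
    apply Integrable.const_mul
    exact (integrable_const 1).indicator hS
  rw [integral_add h1 (integrable_const 1)]
  rw [integral_const_mul, integral_indicator_one hS, integral_const]
  rw [Measure.real, hX, ENNReal.toReal_ofReal hr]
  simp
  ring

theorem stmt3 (α γ : ℕ) (p q : ℝ) (hq0 : 0 < q) (hqp : q < p) (hp1 : p < 1)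
    {Ω : Type*} [MeasurableSpace Ω] (μ : Measure Ω) [IsProbabilityMeasure μ]
    (W : (Fin γ ⊕ Fin α) → Ω → ℝ)
    (hmeas : ∀ i, Measurable (W i))
    (h01 : ∀ i ω, W i ω = 0 ∨ W i ω = 1)
    (hX : ∀ u : Fin γ, μ {ω | W (Sum.inl u) ω = 1} = ENNReal.ofReal q)
    (hY : ∀ v : Fin α, μ {ω | W (Sum.inr v) ω = 1} = ENNReal.ofReal p)
    (hindep : iIndepFun W μ)
    (lam tstar I : ℝ)
    (htstar : tstar = (1/2) * Real.log (p * (1-q) / (q * (1-p))))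
    (hI : I = -2 * Real.log (Real.sqrt (p*q) + Real.sqrt ((1-p)*(1-q))))
    (hlam1 : Real.exp (-tstar * lam) * (q * Real.exp tstar + 1 - q) ≤ 1)
    (hlam2 : Real.exp (tstar * lam) * (p * Real.exp (-tstar) + 1 - p) ≤ 1)
    (Z : Ω → ℝ)
    (hZ : ∀ ω, Z ω = (∑ u : Fin γ, (W (Sum.inl u) ω - lam))
                  + ∑ v : Fin α, (lam - W (Sum.inr v) ω))
    (s : ℝ) (hs : 0 ≤ s) :
    μ {ω | -s ≤ Z ω}
      ≤ ENNReal.ofReal (Real.exp (-I * (min α γ : ℕ) + tstar * s)) := by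
  have hq1 : q < 1 := hqp.trans hp1
  have hp0 : 0 < p := hq0.trans hqp
  -- basic positivity
  have hRpos : 0 < p * (1-q) / (q * (1-p)) := by
    apply div_pos <;> nlinarith
  have hR1 : 1 < p * (1-q) / (q * (1-p)) := by
    rw [lt_div_iff₀ (by nlinarith)]; nlinarith
  have ht : 0 < tstar := by
    rw [htstar]
    have := Real.log_pos hR1
    linarith
  set E := Real.exp tstar with hE
  have hEpos : 0 < E := Real.exp_pos _
  have hE2 : E ^ 2 = p * (1-q) / (q * (1-p)) := by
    have h2 : E ^ 2 = Real.exp ((2:ℕ) * tstar) := by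
      rw [Real.exp_nat_mul]
    rw [h2, htstar]
    rw [show ((2:ℕ):ℝ) * ((1/2) * Real.log (p * (1-q) / (q * (1-p))))
        = Real.log (p * (1-q) / (q * (1-p))) by push_cast; ring]
    exact Real.exp_log hRpos
  -- the two factors
  set A := Real.exp (-tstar * lam) * (q * E + 1 - q) with hAdef
  set B := Real.exp (tstar * lam) * (p * Real.exp (-tstar) + 1 - p) with hBdef
  have hApos : 0 < A := by
    apply mul_pos (Real.exp_pos _)
    nlinarith [mul_pos hq0 hEpos]
  have hBpos : 0 < B := by
    apply mul_pos (Real.exp_pos _)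
    nlinarith [mul_pos hp0 (Real.exp_pos (-tstar))]
  -- key identity A * B = exp (-I)
  set a := Real.sqrt (p*q) with hadef
  set b := Real.sqrt ((1-p)*(1-q)) with hbdef
  have ha2 : a ^ 2 = p * q := Real.sq_sqrt (by positivity)
  have hb2 : b ^ 2 = (1-p) * (1-q) := Real.sq_sqrt (by nlinarith)
  have hapos : 0 < a := Real.sqrt_pos.mpr (by positivity)
  have hbnn : 0 ≤ b := Real.sqrt_nonneg _
  have hE2' : E ^ 2 * (q * (1-p)) = p * (1-q) := by
    rw [hE2, div_mul_cancel₀]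
    nlinarith
  have hab : q * (1-p) * E = a * b := by
    have h1 : (q * (1-p) * E) ^ 2 = (a * b) ^ 2 := by
      linear_combination (q*(1-p)) * hE2' + (-(b^2)) * ha2 + (-(p*q)) * hb2
    have hnn : 0 ≤ q * (1-p) * E := by
      have : 0 < q * (1-p) * E := mul_pos (mul_pos hq0 (by linarith)) hEpos
      linarith
    exact sq_eq_sq₀ hnn (by positivity) |>.mp h1
  have hAB : A * B = Real.exp (-I) := by
    have hexpI : Real.exp (-I) = (a + b) ^ 2 := by
      rw [hI]
      have : -(-2 * Real.log (a + b)) = (2:ℕ) * Real.log (a+b) := by push_cast; ring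
      rw [this, Real.exp_nat_mul, Real.exp_log (by positivity)]
    have hEinv : Real.exp (-tstar) = E⁻¹ := Real.exp_neg tstar
    have hcancel : Real.exp (-tstar * lam) * Real.exp (tstar * lam) = 1 := by
      rw [← Real.exp_add]; ring_nf; exact Real.exp_zero
    have key : (q * E + 1 - q) * (p * E⁻¹ + 1 - p) = (a + b) ^ 2 := by
      have hEne : E ≠ 0 := ne_of_gt hEpos
      have key2 : (q*E+1-q)*(p + (1-p)*E) = (a+b)^2 * E := by
        linear_combination (-E)*ha2 + (-E)*hb2 + (2*E)*hab - hE2'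
      have hinv : E⁻¹ * E = 1 := inv_mul_cancel₀ hEne
      apply mul_right_cancel₀ hEne
      calc (q*E+1-q)*(p*E⁻¹+1-p)*E = (q*E+1-q)*(p*(E⁻¹*E) + (1-p)*E) := by ring
        _ = (q*E+1-q)*(p + (1-p)*E) := by rw [hinv]; ring
        _ = (a+b)^2*E := key2
    rw [hexpI, hAdef, hBdef, hEinv, ← key]
    calc Real.exp (-tstar * lam) * (q * E + 1 - q) * (Real.exp (tstar * lam) * (p * E⁻¹ + 1 - p))
        = (Real.exp (-tstar * lam) * Real.exp (tstar * lam)) * ((q * E + 1 - q) * (p * E⁻¹ + 1 - p)) := by ring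
      _ = (q * E + 1 - q) * (p * E⁻¹ + 1 - p) := by rw [hcancel, one_mul]
  -- the independent variables V
  set g : (Fin γ ⊕ Fin α) → ℝ → ℝ :=
    Sum.elim (fun _ x => x - lam) (fun _ x => lam - x) with hg
  have hgmeas : ∀ i, Measurable (g i) := by
    rintro (u | v)
    · exact measurable_id.sub measurable_const
    · exact measurable_const.sub measurable_id
  set V : (Fin γ ⊕ Fin α) → Ω → ℝ := fun i => g i ∘ W i with hV
  have hmeasV : ∀ i, Measurable (V i) := fun i => (hgmeas i).comp (hmeas i)
  have hindepV : iIndepFun V μ := hindep.comp g hgmeas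
  have hZsum : Z = ∑ i, V i := by
    funext ω
    rw [hZ, Finset.sum_apply, Fintype.sum_sum_type]
    simp [hV, hg]
  -- per-coordinate rewrites
  have hVl : ∀ u : Fin γ, (fun ω => Real.exp (tstar * V (Sum.inl u) ω))
      = fun ω => Real.exp (-tstar * lam) * Real.exp (tstar * W (Sum.inl u) ω) := by
    intro u; funext ω
    rw [← Real.exp_add]
    simp only [hV, hg, Function.comp_apply, Sum.elim_inl]
    ring_nf
  have hVr : ∀ v : Fin α, (fun ω => Real.exp (tstar * V (Sum.inr v) ω))
      = fun ω => Real.exp (tstar * lam) * Real.exp (-tstar * W (Sum.inr v) ω) := by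
    intro v; funext ω
    rw [← Real.exp_add]
    simp only [hV, hg, Function.comp_apply, Sum.elim_inr]
    ring_nf
  -- integrability
  have hint : ∀ i, Integrable (fun ω => Real.exp (tstar * V i ω)) μ := by
    rintro (u | v)
    · rw [hVl u]
      exact (bern_exp_integrable μ _ (hmeas _) (h01 _) tstar).const_mul _
    · rw [hVr v]
      exact (bern_exp_integrable μ _ (hmeas _) (h01 _) (-tstar)).const_mul _
  have hintZ : Integrable (fun ω => Real.exp (tstar * Z ω)) μ := by
    rw [hZsum]
    exact hindepV.integrable_exp_mul_sum hmeasV (fun i _ => hint i)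
  -- mgf computations
  have hmgfA : ∀ u : Fin γ, mgf (V (Sum.inl u)) μ tstar = A := by
    intro u
    rw [mgf, hVl u, integral_const_mul,
      bern_exp_integral μ _ (hmeas _) (h01 _) q hq0.le (hX u) tstar]
  have hmgfB : ∀ v : Fin α, mgf (V (Sum.inr v)) μ tstar = B := by
    intro v
    rw [mgf, hVr v, integral_const_mul]
    have := bern_exp_integral μ _ (hmeas (Sum.inr v)) (h01 _) p hp0.le (hY v) (-tstar)
    rw [show (fun ω => Real.exp (-tstar * W (Sum.inr v) ω))
        = fun ω => Real.exp ((-tstar) * W (Sum.inr v) ω) from rfl, this]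
  have hmgfZ : mgf Z μ tstar = A ^ γ * B ^ α := by
    rw [hZsum, hindepV.mgf_sum hmeasV Finset.univ, Fintype.prod_sum_type]
    simp only [hmgfA, hmgfB, Finset.prod_const, Finset.card_univ, Fintype.card_fin]
  -- power bound
  have hA1 : A ≤ 1 := hlam1
  have hB1 : B ≤ 1 := hlam2
  set m := min α γ with hm
  have hpow : A ^ γ * B ^ α ≤ Real.exp (-I * (m:ℕ)) := by
    have hABm : Real.exp (-I * (m:ℕ)) = (A * B) ^ m := by
      rw [hAB, ← Real.exp_nat_mul]
      congr 1; ring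
    rw [hABm]
    rcases le_total γ α with h | h
    · have hmeq : m = γ := by rw [hm]; exact min_eq_right h
      calc A ^ γ * B ^ α = A ^ γ * (B ^ γ * B ^ (α - γ)) := by
            rw [← pow_add, Nat.add_sub_cancel' h]
        _ = (A*B) ^ γ * B ^ (α - γ) := by
            conv_rhs => rw [mul_pow]
            exact (mul_assoc _ _ _).symm
        _ ≤ (A*B) ^ γ * 1 := by
            exact mul_le_mul_of_nonneg_left (pow_le_one₀ hBpos.le hB1)
              (pow_nonneg (mul_pos hApos hBpos).le _)
        _ = (A*B) ^ m := by rw [mul_one, hmeq]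
    · have hmeq : m = α := by rw [hm]; exact min_eq_left h
      calc A ^ γ * B ^ α = (A ^ α * A ^ (γ - α)) * B ^ α := by
            rw [← pow_add, Nat.add_sub_cancel' h]
        _ = (A*B) ^ α * A ^ (γ - α) := by
            conv_rhs => rw [mul_pow]
            exact mul_right_comm _ _ _
        _ ≤ (A*B) ^ α * 1 := by
            exact mul_le_mul_of_nonneg_left (pow_le_one₀ hApos.le hA1)
              (pow_nonneg (mul_pos hApos hBpos).le _)
        _ = (A*B) ^ m := by rw [mul_one, hmeq]
  -- Chernoff
  have hcher := measure_ge_le_exp_mul_mgf (μ := μ) (X := Z) (-s) ht.le hintZ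
  have hfinal : (μ {ω | -s ≤ Z ω}).toReal ≤ Real.exp (-I * (m:ℕ) + tstar * s) := by
    calc (μ {ω | -s ≤ Z ω}).toReal
        ≤ Real.exp (-tstar * -s) * mgf Z μ tstar := hcher
      _ = Real.exp (tstar * s) * (A ^ γ * B ^ α) := by rw [hmgfZ, neg_mul_neg]
      _ ≤ Real.exp (tstar * s) * Real.exp (-I * (m:ℕ)) := by
          exact mul_le_mul_of_nonneg_left hpow (Real.exp_pos _).le
      _ = Real.exp (-I * (m:ℕ) + tstar * s) := by rw [← Real.exp_add, add_comm]
  calc μ {ω | -s ≤ Z ω} = ENNReal.ofReal ((μ {ω | -s ≤ Z ω}).toReal) :=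
        (ENNReal.ofReal_toReal (measure_ne_top μ _)).symm
    _ ≤ ENNReal.ofReal (Real.exp (-I * (m:ℕ) + tstar * s)) :=
        ENNReal.ofReal_le_ofReal hfinal
end

section
/- (Disjointness of label orbits after a swap) Let K ≥ 2 and σ : [n] → [K] be a labeling in which community k has at least 2 elements and community ℓ has at least 2 elements, with k ≠ ℓ. Let σ′ be obtained from σ by swapping the labels of one vertex u with σ(u)=k and one vertex v with σ(v)=ℓ. Then for no permutation π of [K] does σ′ = π∘σ; i.e., the orbits {π∘σ} and {π∘σ′} are disjoint. -/
theorem stmt14 (n K : ℕ) (hn : 4 ≤ n) (hK : 2 ≤ K)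
    (σ : Fin n → Fin K) (k l : Fin K) (hkl : k ≠ l)
    (u v w w' : Fin n) (huv : u ≠ v) (hwu : w ≠ u) (hw'v : w' ≠ v)
    (hσu : σ u = k) (hσv : σ v = l) (hσw : σ w = k) (hσw' : σ w' = l)
    (σ' : Fin n → Fin K)
    (hσ'u : σ' u = l) (hσ'v : σ' v = k)
    (hσ'rest : ∀ i : Fin n, i ≠ u → i ≠ v → σ' i = σ i) :
    ¬ ∃ π : Equiv.Perm (Fin K), σ' = ⇑π ∘ σ := by
  rintro ⟨π, h⟩
  have hwv : w ≠ v := fun e => hkl (by rw [← hσw, e, hσv])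
  have h1 := congrFun h u
  have h2 := congrFun h w
  rw [hσ'rest w hwu hwv] at h2
  simp only [Function.comp, hσu, hσw, hσ'u] at h1 h2
  exact hkl (h2.trans h1.symm)
end

section
/- (Split–merge lower bound, small-m case, with quantitative form) Let K ≥ 3, 1 ≤ β < √(5/3), and let σ₀, σ be β-balanced labelings [n]→[K] (every community of each has size between n/(βK) and βn/K) with d(σ,σ₀) = m ≤ n/(2βK), where d is Hamming distance minimized over label permutations. Then both the split count α(σ;σ₀) and the merge count γ(σ;σ₀) are at least nm/(βK) − m². -/
/-!
Fix a label permutation `π` attaining `m`, and let `D` be the `m` vertices with `σ i ≠ π (σ₀ i)`.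
A vertex `i ∈ D` and a vertex `j ∉ D` never carry equal labels under both `σ₀` and `σ`, so every
`σ₀`-community partner of `i` outside `D` forms a split pair with it, and every `σ`-community
partner outside `D` a merge pair. Each community has at least `n/(βK)` members, at most `m` of
them in `D`; since a pair with exactly one endpoint in `D` is counted only once, there are at
least `m (n/(βK) - m)` pairs of either kind.
-/

open Finset

section CrossingPairs

variable {α : Type*} [Fintype α] [LinearOrder α]

theorem sum_card_crossing_eq_card_filter_product (D : Finset α) (Q : α → α → Prop)
    [DecidableRel Q] :
    ∑ i ∈ D, #{j | j ∉ D ∧ Q i j} = #{p ∈ D ×ˢ Dᶜ | Q p.1 p.2} := by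
  rw [card_filter, sum_product]
  refine sum_congr rfl fun i _ => ?_
  rw [← card_filter]
  congr 1; ext; simp

theorem sum_card_crossing_le_card_filter_lt (D : Finset α) (Q : α → α → Prop) [DecidableRel Q]
    (hQ : ∀ i j, Q i j → Q j i) :
    ∑ i ∈ D, #{j | j ∉ D ∧ Q i j} ≤ #{p : α × α | p.1 < p.2 ∧ Q p.1 p.2} := by
  rw [sum_card_crossing_eq_card_filter_product]
  refine card_le_card_of_injOn (fun p => (p.1 ⊓ p.2, p.1 ⊔ p.2)) ?_ ?_
  · rintro ⟨a, b⟩ hp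
    simp only [coe_filter, mem_product, mem_compl, Set.mem_ofPred_eq] at hp
    have hab : a ≠ b := by rintro rfl; exact hp.1.2 hp.1.1
    rcases hab.lt_or_gt with h | h
    · simp [h.le, h, hp.2]
    · simp [h.le, h, hQ _ _ hp.2]
  · rintro ⟨a, b⟩ hp ⟨c, d⟩ hq he
    simp only [coe_filter, mem_product, mem_compl, Set.mem_ofPred_eq] at hp hq
    simp only [Prod.mk.injEq] at he
    grind

end CrossingPairs

section Labelings

variable {ι κ : Type*} [Fintype ι] [DecidableEq ι] [DecidableEq κ]

theorem card_fiber_le_card_fiber_compl_add (τ : ι → κ) (D : Finset ι) (i : ι) :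
    #{j | τ j = τ i} ≤ #{j | j ∉ D ∧ τ i = τ j} + #D := by
  refine (card_le_card fun j hj => ?_).trans (card_union_le _ D)
  by_cases hjD : j ∈ D
  · exact mem_union_right _ hjD
  · exact mem_union_left _ (by simp_all [eq_comm])

theorem le_sum_card_fiber_compl (τ : ι → κ) (D : Finset ι) {L : ℝ}
    (hL : ∀ c, L ≤ #{i | τ i = c}) :
    #D * L - #D ^ 2 ≤ ∑ i ∈ D, (#{j | j ∉ D ∧ τ i = τ j} : ℝ) :=
  calc (#D : ℝ) * L - #D ^ 2 = ∑ _i ∈ D, (L - #D) := by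
        rw [sum_const, nsmul_eq_mul]; ring
    _ ≤ ∑ i ∈ D, (#{j | j ∉ D ∧ τ i = τ j} : ℝ) := sum_le_sum fun i _ => by
        have h := card_fiber_le_card_fiber_compl_add τ D i
        have hτi := hL (τ i)
        rw [← Nat.cast_le (α := ℝ), Nat.cast_add] at h
        linarith

theorem le_card_pairs_of_fiber_compl [LinearOrder ι] (τ : ι → κ) (D : Finset ι) {L : ℝ}
    (hL : ∀ c, L ≤ #{i | τ i = c}) (Q : ι → ι → Prop) [DecidableRel Q]
    (hQ : ∀ i j, Q i j → Q j i) (hτQ : ∀ i ∈ D, ∀ j ∉ D, τ i = τ j → Q i j) :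
    #D * L - #D ^ 2 ≤ (#{p : ι × ι | p.1 < p.2 ∧ Q p.1 p.2} : ℝ) := by
  refine (le_sum_card_fiber_compl τ D hL).trans ?_
  rw [← Nat.cast_sum, Nat.cast_le]
  refine (sum_le_sum fun i hi => card_le_card ?_).trans
    (sum_card_crossing_le_card_filter_lt D Q hQ)
  intro j hj
  simp only [mem_filter, mem_univ, true_and] at hj ⊢
  exact ⟨hj.1, hτQ i hi j hj.1 hj.2⟩

end Labelings

theorem stmt18_general (n K : ℕ)
    (β : ℝ)
    (σ₀ σ : Fin n → Fin K)
    (hbal₀ : ∀ c : Fin K,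
      (n:ℝ)/(β*K) ≤ ((Finset.univ.filter (fun i => σ₀ i = c)).card : ℝ) ∧
      ((Finset.univ.filter (fun i => σ₀ i = c)).card : ℝ) ≤ β*n/K)
    (hbal : ∀ c : Fin K,
      (n:ℝ)/(β*K) ≤ ((Finset.univ.filter (fun i => σ i = c)).card : ℝ) ∧
      ((Finset.univ.filter (fun i => σ i = c)).card : ℝ) ≤ β*n/K)
    (m : ℕ)
    (hm : m = Finset.univ.inf' ⟨1, Finset.mem_univ 1⟩
      (fun π : Equiv.Perm (Fin K) =>
        (Finset.univ.filter (fun i => σ i ≠ π (σ₀ i))).card)) :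
    ((n:ℝ)*m/(β*K) - (m:ℝ)^2
        ≤ ((Finset.univ.filter (fun p : Fin n × Fin n =>
            p.1 < p.2 ∧ σ₀ p.1 = σ₀ p.2 ∧ σ p.1 ≠ σ p.2)).card : ℝ)) ∧
    ((n:ℝ)*m/(β*K) - (m:ℝ)^2
        ≤ ((Finset.univ.filter (fun p : Fin n × Fin n =>
            p.1 < p.2 ∧ σ₀ p.1 ≠ σ₀ p.2 ∧ σ p.1 = σ p.2)).card : ℝ)) := by
  obtain ⟨π, -, hπ⟩ := exists_mem_eq_inf' univ_nonempty
    (fun π : Equiv.Perm (Fin K) => #{i | σ i ≠ π (σ₀ i)})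
  set D : Finset (Fin n) := {i | σ i ≠ π (σ₀ i)}
  have hD : (#D : ℝ) = m := by rw [hm, hπ]
  have hcross : ∀ i ∈ D, ∀ j ∉ D, σ₀ i = σ₀ j → σ i ≠ σ j := by
    intro i hi j hj h₀ h
    simp only [D, mem_filter, mem_univ, true_and, not_not] at hi hj
    exact hi (by rw [h, hj, h₀])
  rw [show (n:ℝ)*m/(β*K) - (m:ℝ)^2 = #D * ((n:ℝ)/(β*K)) - #D ^ 2 by rw [hD]; ring]
  exact ⟨le_card_pairs_of_fiber_compl σ₀ D (fun c => (hbal₀ c).1)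
      (fun a b => σ₀ a = σ₀ b ∧ σ a ≠ σ b) (fun _ _ h => ⟨h.1.symm, Ne.symm h.2⟩)
      fun i hi j hj h => ⟨h, hcross i hi j hj h⟩,
    le_card_pairs_of_fiber_compl σ D (fun c => (hbal c).1)
      (fun a b => σ₀ a ≠ σ₀ b ∧ σ a = σ b) (fun _ _ h => ⟨Ne.symm h.1, h.2.symm⟩)
      fun i hi j hj h => ⟨(hcross i hi j hj · h), h⟩⟩

theorem stmt18 (n K : ℕ) (hK : 3 ≤ K)
    (β : ℝ) (hβ1 : 1 ≤ β) (hβ2 : β < Real.sqrt (5/3))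
    (σ₀ σ : Fin n → Fin K)
    (hbal₀ : ∀ c : Fin K,
      (n:ℝ)/(β*K) ≤ ((Finset.univ.filter (fun i => σ₀ i = c)).card : ℝ) ∧
      ((Finset.univ.filter (fun i => σ₀ i = c)).card : ℝ) ≤ β*n/K)
    (hbal : ∀ c : Fin K,
      (n:ℝ)/(β*K) ≤ ((Finset.univ.filter (fun i => σ i = c)).card : ℝ) ∧
      ((Finset.univ.filter (fun i => σ i = c)).card : ℝ) ≤ β*n/K)
    (m : ℕ)
    (hm : m = Finset.univ.inf' ⟨1, Finset.mem_univ 1⟩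
      (fun π : Equiv.Perm (Fin K) =>
        (Finset.univ.filter (fun i => σ i ≠ π (σ₀ i))).card))
    (hmsmall : (m:ℝ) ≤ (n:ℝ)/(2*β*K)) :
    ((n:ℝ)*m/(β*K) - (m:ℝ)^2
        ≤ ((Finset.univ.filter (fun p : Fin n × Fin n =>
            p.1 < p.2 ∧ σ₀ p.1 = σ₀ p.2 ∧ σ p.1 ≠ σ p.2)).card : ℝ)) ∧
    ((n:ℝ)*m/(β*K) - (m:ℝ)^2
        ≤ ((Finset.univ.filter (fun p : Fin n × Fin n =>
            p.1 < p.2 ∧ σ₀ p.1 ≠ σ₀ p.2 ∧ σ p.1 = σ p.2)).card : ℝ)) :=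
  stmt18_general n K β σ₀ σ hbal₀ hbal m hm
end
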